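/- For all n ≥ 0 and 0 ≤ k ≤ n/2, the coefficient of S_{n-2k}(x) in the expansion of x^n in the basis (S_m(x))_{m≥0} equals binom(n,k) − binom(n,k−1) (a ballot/Catalan-type number), with the convention binom(n,−1) = 0; in particular these coefficients are nonnegative. -/
import Mathlib

open Polynomial

/-- Normalized Chebyshev polynomials of the second kind. -/
noncomputable def chebS : ℕ → Polynomial ℤ
  | 0 => 1
  | 1 => X
  | (n + 2) => X * chebS (n + 1) - chebS n

/-- Chebyshev S extended to integer indices, with `S₋₁ = 0`, `S₋ₘ₋₂ = -Sₘ`. -/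
noncomputable def chebZ (m : ℤ) : Polynomial ℤ :=
  if 0 ≤ m then chebS m.toNat else if m = -1 then 0 else -chebS (-m - 2).toNat

lemma chebZ_natCast (n : ℕ) : chebZ (n : ℤ) = chebS n := by
  simp [chebZ]

lemma chebZ_negCast (n : ℕ) : chebZ (-(n : ℤ) - 2) = -chebS n := by
  have h1 : ¬ (0 : ℤ) ≤ -(n:ℤ) - 2 := by omega
  have h2 : ¬ (-(n:ℤ) - 2 = -1) := by omega
  have h3 : (-(-(n:ℤ) - 2) - 2).toNat = n := by omega
  simp [chebZ, h1, h2, h3]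

lemma chebZ_anti (m : ℤ) (hm : 0 ≤ m) : chebZ (-m - 2) = -chebZ m := by
  lift m to ℕ using hm
  rw [chebZ_negCast, chebZ_natCast]

lemma chebZ_zero : chebZ 0 = 1 := by
  rw [show (0:ℤ) = ((0:ℕ):ℤ) from rfl, chebZ_natCast]; rfl

lemma chebZ_one : chebZ 1 = X := by
  rw [show (1:ℤ) = ((1:ℕ):ℤ) from rfl, chebZ_natCast]; rfl

lemma chebZ_neg_one : chebZ (-1) = 0 := by simp [chebZ]

lemma chebZ_neg_two : chebZ (-2) = -1 := by
  rw [show (-2:ℤ) = -((0:ℕ):ℤ) - 2 by norm_num, chebZ_negCast]; rfl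

lemma chebZ_neg_three : chebZ (-3) = -X := by
  rw [show (-3:ℤ) = -((1:ℕ):ℤ) - 2 by norm_num, chebZ_negCast]; rfl

lemma chebS_rec (j : ℕ) : X * chebS (j + 1) = chebS (j + 2) + chebS j := by
  rw [show chebS (j + 2) = X * chebS (j + 1) - chebS j from rfl]; ring

/-- The three-term recurrence, valid at every integer index. -/
lemma chebZ_mul_X (m : ℤ) : X * chebZ m = chebZ (m + 1) + chebZ (m - 1) := by
  have cases3 : (∃ n : ℕ, m = (n : ℤ)) ∨ m = -1 ∨ ∃ n : ℕ, m = -(n : ℤ) - 2 := by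
    rcases le_or_gt 0 m with h | h
    · exact Or.inl ⟨m.toNat, by omega⟩
    · rcases eq_or_lt_of_le (by omega : m ≤ -1) with h' | h'
      · exact Or.inr (Or.inl h')
      · exact Or.inr (Or.inr ⟨(-m - 2).toNat, by omega⟩)
  rcases cases3 with ⟨n, rfl⟩ | rfl | ⟨n, rfl⟩
  · cases n with
    | zero =>
        rw [show (((0:ℕ):ℤ)) = (0:ℤ) from rfl]
        norm_num [chebZ_zero, chebZ_one, chebZ_neg_one]
    | succ j =>
        rw [show ((j+1:ℕ):ℤ) + 1 = ((j+2:ℕ):ℤ) by push_cast; ring,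
          show ((j+1:ℕ):ℤ) - 1 = ((j:ℕ):ℤ) by push_cast; ring,
          chebZ_natCast, chebZ_natCast, chebZ_natCast, chebS_rec]
  · norm_num [chebZ_neg_one, chebZ_zero, chebZ_neg_two]
  · cases n with
    | zero =>
        rw [show -((0:ℕ):ℤ) - 2 = (-2:ℤ) by norm_num]
        norm_num [chebZ_neg_one, chebZ_neg_two, chebZ_neg_three]
    | succ j =>
        rw [show -((j+1:ℕ):ℤ) - 2 + 1 = -((j:ℕ):ℤ) - 2 by push_cast; ring,
          show -((j+1:ℕ):ℤ) - 2 - 1 = -((j+2:ℕ):ℤ) - 2 by push_cast; ring,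
          chebZ_negCast, chebZ_negCast, chebZ_negCast]
        linear_combination -chebS_rec j

/-- Binomial-type expansion of `x^n` over the extended family. -/
lemma chebZ_expand (n : ℕ) : (X : Polynomial ℤ) ^ n =
    ∑ k ∈ Finset.range (n + 1), C ((n.choose k : ℤ)) * chebZ ((n : ℤ) - 2 * k) := by
  induction n with
  | zero => simp [chebZ_zero]
  | succ n ih =>
      have step : ∀ k ∈ Finset.range (n + 1),
          C ((n.choose k : ℤ)) * chebZ ((n : ℤ) - 2 * k) * X =
          C ((n.choose k : ℤ)) * chebZ (((n:ℤ) + 1) - 2 * (k:ℤ))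
            + C ((n.choose k : ℤ)) * chebZ (((n:ℤ) + 1) - 2 * ((k:ℤ) + 1)) := by
        intro k _
        have h := chebZ_mul_X ((n : ℤ) - 2 * k)
        rw [show (n:ℤ) - 2*k + 1 = ((n:ℤ)+1) - 2*(k:ℤ) by ring,
          show (n:ℤ) - 2*k - 1 = ((n:ℤ)+1) - 2*((k:ℤ)+1) by ring] at h
        rw [mul_comm _ X, mul_left_comm, h, mul_add]
      rw [pow_succ, ih, Finset.sum_mul, Finset.sum_congr rfl step, Finset.sum_add_distrib]
      have e1 : ∑ k ∈ Finset.range (n + 1),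
            C ((n.choose k : ℤ)) * chebZ (((n:ℤ)+1) - 2 * (k:ℤ))
          = (∑ k ∈ Finset.range n,
              C ((n.choose (k+1) : ℤ)) * chebZ (((n:ℤ)+1) - 2 * ((k+1:ℕ):ℤ)))
            + C ((n.choose 0 : ℤ)) * chebZ (((n:ℤ)+1) - 2 * ((0:ℕ):ℤ)) :=
        Finset.sum_range_succ' _ n
      have e2 : ∑ k ∈ Finset.range n,
            C ((n.choose (k+1) : ℤ)) * chebZ (((n:ℤ)+1) - 2 * ((k+1:ℕ):ℤ))
          = ∑ k ∈ Finset.range (n+1),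
            C ((n.choose (k+1) : ℤ)) * chebZ (((n:ℤ)+1) - 2 * ((k:ℤ)+1)) := by
        rw [Finset.sum_range_succ, Nat.choose_succ_self]
        push_cast
        simp
      have e3 : ∀ k ∈ Finset.range (n+1),
          C ((n.choose (k+1) : ℤ)) * chebZ (((n:ℤ)+1) - 2 * ((k:ℤ)+1))
            + C ((n.choose k : ℤ)) * chebZ (((n:ℤ)+1) - 2 * ((k:ℤ)+1))
          = C (((n+1).choose (k+1) : ℤ)) * chebZ (((n:ℤ)+1) - 2 * ((k+1:ℕ):ℤ)) := by
        intro k _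
        rw [show ((n:ℤ)+1) - 2 * ((k+1 : ℕ) : ℤ) = ((n:ℤ)+1) - 2 * ((k:ℤ)+1) by push_cast; ring,
          ← add_mul, ← C_add, Nat.choose_succ_succ']
        push_cast; ring_nf
      have e4 : ∑ k ∈ Finset.range (n + 1 + 1),
            C (((n+1).choose k : ℤ)) * chebZ (((n:ℤ)+1) - 2 * (k:ℤ))
          = (∑ k ∈ Finset.range (n+1),
              C (((n+1).choose (k+1) : ℤ)) * chebZ (((n:ℤ)+1) - 2 * ((k+1:ℕ):ℤ)))
            + C (((n+1).choose 0 : ℤ)) * chebZ (((n:ℤ)+1) - 2 * ((0:ℕ):ℤ)) :=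
        Finset.sum_range_succ' _ (n+1)
      rw [show ((n+1:ℕ):ℤ) = (n:ℤ)+1 by push_cast; ring, e4, e1, e2,
        add_right_comm, ← Finset.sum_add_distrib, Finset.sum_congr rfl e3]
      norm_num

/-- Ballot coefficients (with indicator for `2k ≤ n`). -/
noncomputable def ballotC (n k : ℕ) : ℤ :=
  if 2*k ≤ n then (n.choose k : ℤ) - (if k = 0 then 0 else (n.choose (k-1) : ℤ)) else 0

def mirr (n a : ℕ) : ℕ := if a = 0 then 0 else n + 1 - a

noncomputable def Fm (n k : ℕ) : Polynomial ℤ :=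
  C ((n.choose k : ℤ) - ballotC n k) * chebZ ((n:ℤ) - 2*k)

lemma Fm_zero (n : ℕ) : Fm n 0 = 0 := by
  simp [Fm, ballotC]

lemma Fm_mid (n a : ℕ) (h : 2*a = n+1) : Fm n a = 0 := by
  rw [Fm, show ((n:ℤ) - 2*a) = -1 by omega, chebZ_neg_one, mul_zero]

lemma Fm_pair (n a : ℕ) (h1 : 1 ≤ a) (h2 : 2*a ≤ n) : Fm n a + Fm n (n+1-a) = 0 := by
  have c1 : (n.choose a : ℤ) - ballotC n a = (n.choose (a-1) : ℤ) := by
    have : ¬ a = 0 := by omega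
    simp [ballotC, h2, this]
  have c2 : (n.choose (n+1-a) : ℤ) - ballotC n (n+1-a) = (n.choose (a-1) : ℤ) := by
    have hb : ¬ 2*(n+1-a) ≤ n := by omega
    rw [ballotC, if_neg hb, sub_zero, show n+1-a = n - (a-1) by omega,
      Nat.choose_symm (by omega)]
  have c3 : ((n:ℤ) - 2*((n+1-a : ℕ):ℤ)) = -((n:ℤ) - 2*a) - 2 := by
    push_cast [show a ≤ n+1 by omega]
    ring
  rw [Fm, Fm, c1, c2, c3, chebZ_anti _ (by omega)]
  ring

lemma fold_zero (n : ℕ) : ∑ k ∈ Finset.range (n+1), Fm n k = 0 := by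
  apply Finset.sum_involution (fun a _ => mirr n a)
  · intro a ha
    rw [Finset.mem_range] at ha
    by_cases h0 : a = 0
    · simp [h0, mirr, Fm_zero]
    · rw [mirr, if_neg h0]
      by_cases h2 : 2*a ≤ n
      · exact Fm_pair n a (by omega) h2
      · by_cases h3 : 2*(n+1-a) ≤ n
        · have := Fm_pair n (n+1-a) (by omega) h3
          rw [show n+1-(n+1-a) = a by omega] at this
          rw [add_comm]; exact this
        · have hm : 2*a = n+1 := by omega
          rw [show n+1-a = a by omega, Fm_mid n a hm]
          ring
  · intro a ha hne
    rw [Finset.mem_range] at ha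
    by_cases h0 : a = 0
    · exact absurd (by simp [h0, Fm_zero]) hne
    · rw [mirr, if_neg h0]
      intro hfix
      have hm : 2*a = n+1 := by omega
      exact hne (Fm_mid n a hm)
  · intro a ha
    rw [Finset.mem_range] at ha ⊢
    rw [mirr]
    split_ifs <;> omega
  · intro a ha
    rw [Finset.mem_range] at ha
    rw [mirr, mirr]
    split_ifs <;> omega

/-- In the expansion of `x^n` in the basis `(S_m(x))_{m ≥ 0}`, the coefficient
of `S_{n-2k}` (for `0 ≤ k ≤ n/2`) equals `binom(n,k) - binom(n,k-1)` (with the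
convention `binom(n,-1) = 0`); in particular these coefficients are
nonnegative. -/
theorem pow_eq_sum_ballot_chebS (n : ℕ) :
    ((X : Polynomial ℤ) ^ n =
      ∑ k ∈ Finset.range (n / 2 + 1),
        Polynomial.C ((n.choose k : ℤ) -
          (if k = 0 then 0 else (n.choose (k - 1) : ℤ))) * chebS (n - 2 * k)) ∧
    (∀ k : ℕ, k ≤ n / 2 →
      (if k = 0 then 0 else (n.choose (k - 1) : ℤ)) ≤ (n.choose k : ℤ)) := by
  constructor
  · have h1 : ∑ k ∈ Finset.range (n+1), Fm n k
        = (∑ k ∈ Finset.range (n+1), C ((n.choose k : ℤ)) * chebZ ((n:ℤ) - 2*k))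
          - ∑ k ∈ Finset.range (n+1), C (ballotC n k) * chebZ ((n:ℤ) - 2*k) := by
      rw [← Finset.sum_sub_distrib]
      refine Finset.sum_congr rfl fun k _ => ?_
      rw [Fm, C_sub, sub_mul]
    have h2 := fold_zero n
    rw [h1, sub_eq_zero] at h2
    rw [chebZ_expand, h2]
    symm
    rw [← Finset.sum_subset (Finset.range_subset_range.2 (by omega : n/2+1 ≤ n+1))
      (fun k hk hk' => ?_)]
    · refine Finset.sum_congr rfl fun k hk => ?_
      rw [Finset.mem_range] at hk
      have h2k : 2*k ≤ n := by omega
      rw [ballotC, if_pos h2k,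
        show ((n:ℤ) - 2*k) = ((n - 2*k : ℕ) : ℤ) by omega, chebZ_natCast]
    · rw [Finset.mem_range] at hk hk'
      have : ¬ 2*k ≤ n := by omega
      rw [ballotC, if_neg this, C_0, zero_mul]
  · intro k hk
    split_ifs with h
    · exact Int.natCast_nonneg _
    · have hlt : k - 1 < n / 2 := by omega
      have := Nat.choose_le_succ_of_lt_half_left hlt
      rw [show k - 1 + 1 = k by omega] at this
      exact_mod_cast this
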